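/- Firing probability after fewer than m failures (supercritical case): Let μ ∈ (0,1), w > 0, γ = w/(1−μ) with γ ≥ 1, and let v : {1,…,N} → ℝ satisfy v(1) = 0 and (1 − μ^{i−1})·γ ≤ v(i) ≤ γ for all i. Let k ∈ ℕ be such that μ^k γ ≥ 1. Then η ≤ (1/N) Σ_{i=1}^{N} φ(μ^k v(i)) ≤ θ, where θ = φ(γ)(1 − 1/N) = 1 − 1/N and η = φ(γ)(1 − (1/N)(1−μ^N)/(1−μ)) = 1 − (1/N)(1−μ^N)/(1−μ). (Here μ^k v is the potential vector after k consecutive non-firing (leakage) steps starting from v.) -/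

import Mathlib

/-- The firing probability function: `φ(u) = min(u,1)` for `u ≥ 0` and
`φ(u) = 0` for `u ≤ 0`. -/
noncomputable def phi (u : ℝ) : ℝ := min (max u 0) 1

/-!
Every neuron fires with probability at most one, and the neuron at index `0` has potential `0`
whatever the leakage, which gives the upper bound `1 - 1/N`. For the lower bound, `μ ^ k γ ≥ 1`
turns `(1 - μ ^ i) γ ≤ v i` into `1 - μ ^ i ≤ μ ^ k v i`, so neuron `i` fires with probability at
least `1 - μ ^ i`, and the geometric sum `∑_{i < N} (1 - μ ^ i) = N - (1 - μ ^ N) / (1 - μ)`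
gives the bound.
-/

theorem phi_zero : phi 0 = 0 := by
  simp [phi]

theorem phi_le_one (u : ℝ) : phi u ≤ 1 :=
  min_le_right _ _

theorem le_phi {a u : ℝ} (ha : a ≤ 1) (hau : a ≤ u) : a ≤ phi u :=
  le_min (hau.trans (le_max_left _ _)) ha

theorem le_mul_of_mul_le {α : Type*} [CommSemiring α] [PartialOrder α] [IsOrderedRing α]
    {a s g x : α} (ha : 0 ≤ a) (hs : 0 ≤ s) (hsg : 1 ≤ s * g)
    (hax : a * g ≤ x) : a ≤ s * x :=
  calc a = a * 1 := (mul_one a).symm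
    _ ≤ a * (s * g) := mul_le_mul_of_nonneg_left hsg ha
    _ = s * (a * g) := by ring
    _ ≤ s * x := mul_le_mul_of_nonneg_left hax hs

theorem sum_range_one_sub_pow {K : Type*} [Field K] {μ : K} (hμ : μ ≠ 1) (n : ℕ) :
    ∑ i ∈ Finset.range n, (1 - μ ^ i) = n - (1 - μ ^ n) / (1 - μ) := by
  have hμ' : 1 - μ ≠ 0 := sub_ne_zero.mpr hμ.symm
  rw [Finset.sum_sub_distrib, geom_sum_eq hμ n, Finset.sum_const, Finset.card_range, nsmul_one]
  field_simp
  ring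

theorem sum_le_card_sub_one {ι : Type*} [Fintype ι] [DecidableEq ι] {f : ι → ℝ}
    (hf : ∀ i, f i ≤ 1) (j : ι) (hj : f j = 0) :
    ∑ i, f i ≤ Fintype.card ι - 1 := by
  rw [← Finset.add_sum_erase _ _ (Finset.mem_univ j), hj, zero_add]
  calc ∑ i ∈ Finset.univ.erase j, f i ≤ ∑ _i ∈ Finset.univ.erase j, (1 : ℝ) :=
        Finset.sum_le_sum fun i _ => hf i
    _ = Fintype.card ι - 1 := by
        rw [Finset.sum_const, Finset.card_erase_of_mem (Finset.mem_univ j), nsmul_one,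
          Finset.card_univ, Nat.cast_pred (Fintype.card_pos_iff.mpr ⟨j⟩)]

/-- Firing probability after fewer than `m` failures
(supercritical case).  Let `γ = w/(1−μ) ≥ 1`, let `v : Fin N → ℝ` (0-based)
satisfy `v 0 = 0` and `(1 − μ^i) γ ≤ v i ≤ γ` for all `i`, and let `k ∈ ℕ` with
`μ^k γ ≥ 1`.  Then `1 − (1/N)(1−μ^N)/(1−μ) ≤ (1/N) Σ_i φ(μ^k v i) ≤ 1 − 1/N`;
these are the bounds `η = φ(γ)(1 − (1/N)(1−μ^N)/(1−μ))` and
`θ = φ(γ)(1 − 1/N)` since `φ(γ) = 1` when `γ ≥ 1`. -/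
theorem firing_prob_before_m_failures (N : ℕ) (hN : 2 ≤ N) (μ w : ℝ)
    (hμ0 : 0 < μ) (hμ1 : μ < 1)
    (v : Fin N → ℝ)
    (hv0 : v ⟨0, by omega⟩ = 0)
    (hv : ∀ i : Fin N,
      (1 - μ ^ (i : ℕ)) * (w / (1 - μ)) ≤ v i ∧ v i ≤ w / (1 - μ))
    (k : ℕ) (hk : 1 ≤ μ ^ k * (w / (1 - μ))) :
    1 - (1 / (N : ℝ)) * (1 - μ ^ N) / (1 - μ)
        ≤ (1 / (N : ℝ)) * ∑ i, phi (μ ^ k * v i) ∧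
    (1 / (N : ℝ)) * ∑ i, phi (μ ^ k * v i) ≤ 1 - 1 / (N : ℝ) := by
  constructor
  · calc 1 - (1 / (N : ℝ)) * (1 - μ ^ N) / (1 - μ)
          = 1 / N * (N - (1 - μ ^ N) / (1 - μ)) := by field_simp
      _ = 1 / N * ∑ i : Fin N, (1 - μ ^ (i : ℕ)) := by
          rw [Fin.sum_univ_eq_sum_range (fun i => 1 - μ ^ i), sum_range_one_sub_pow hμ1.ne]
      _ ≤ 1 / N * ∑ i, phi (μ ^ k * v i) := by
          gcongr with i
          exact le_phi (by simp [hμ0.le]) <| le_mul_of_mul_le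
            (sub_nonneg.mpr (pow_le_one₀ hμ0.le hμ1.le)) (by positivity) hk (hv i).1
  · calc (1 / (N : ℝ)) * ∑ i, phi (μ ^ k * v i) ≤ 1 / N * (N - 1) := by
          gcongr
          simpa using sum_le_card_sub_one (fun i => phi_le_one _) (⟨0, by omega⟩ : Fin N)
            (by rw [hv0, mul_zero, phi_zero])
      _ = 1 - 1 / N := by field_simp
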